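/- arXiv:2507.03782 — 5 statements merged into one kernel-verified Lean document; each statement's English description precedes it below -/
import Mathlib

section
/- Let U₁, V₁ ⊆ H₁ be open sets and let φ : U₁ → V₁ and ψ : V₁ → H₁ be (H₁,H₂)-tame maps. Then the composition ψ ∘ φ : U₁ → H₁ is (H₁,H₂)-tame. -/
/-!
By the chain rule, `d²(ψ₂ ∘ φ₂)_y(ξ, η) = d²ψ₂_{φ₂ y}(dφ₂ ξ, dφ₂ η) + dψ₂_{φ₂ y}(d²φ₂(ξ, η))`.
Two kinds of local bounds make both terms tame. First, the `H₁`-bounds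
`|dφ₂ ξ|₁ ≤ C |ξ|₁` and `|d²φ₂(ξ, η)|₁ ≤ C |ξ|₁ |η|₁`, inherited from `dφ` and `d²φ` through
`φ ∘ ι = ι ∘ φ₂`. Second, the tame first-order bounds `|φ₂ y|₂ ≤ a + b |y|₂` and
`|dφ₂_y ξ|₂ ≤ a |ξ|₂ + (a + b |y|₂) |ξ|₁`, obtained by integrating the tameness estimate along
segments from a base point; it is the bounded `H₁`-diameter of the neighbourhood that keeps them
linear in `|y|₂`. After substitution, and using `|·|₁ ≤ |·|₂`, every term is a multiple of
`|ξ|₁ |η|₂ + |ξ|₂ |η|₁ + |y|₂ |ξ|₁ |η|₁`. Points of `H₂` near `x ∈ H₁` are handled with the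
filter `comap ι (𝓝 x)`.
-/

open Metric Set

/-- A map `φ : U₁ → H₁` together with its restriction `φ₂ : U₂ → H₂`
(where `H₂` is included into `H₁` via `ι` and `U₂ = ι ⁻¹' U₁`) is
`(H₁,H₂)`-tame if `φ` is `C²` on `U₁`, its restriction to `U₂` takes values
in `H₂` (witnessed by `φ₂`) and is `C²` there, and the second derivative of
the restriction satisfies the tameness estimate locally near every point
of `U₁`. -/
def IsTame {H₁ H₂ : Type*}
    [NormedAddCommGroup H₁] [InnerProductSpace ℝ H₁] [CompleteSpace H₁]
    [NormedAddCommGroup H₂] [InnerProductSpace ℝ H₂] [CompleteSpace H₂]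
    (ι : H₂ →L[ℝ] H₁) (U₁ : Set H₁) (φ : H₁ → H₁) (φ₂ : H₂ → H₂) : Prop :=
  ContDiffOn ℝ 2 φ U₁ ∧
  (∀ y : H₂, ι y ∈ U₁ → φ (ι y) = ι (φ₂ y)) ∧
  ContDiffOn ℝ 2 φ₂ (ι ⁻¹' U₁) ∧
  ∀ x ∈ U₁, ∃ W : Set H₁, W ⊆ U₁ ∧ IsOpen W ∧ x ∈ W ∧ ∃ κ : ℝ, 0 < κ ∧
    ∀ y : H₂, ι y ∈ W → ∀ ξ η : H₂,
      ‖fderiv ℝ (fderiv ℝ φ₂) y ξ η‖ ≤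
        κ * (‖ι ξ‖ * ‖η‖ + ‖ξ‖ * ‖ι η‖ + ‖y‖ * ‖ι ξ‖ * ‖ι η‖)

open Filter Topology

section Weight

variable {E F G : Type*} [NormedAddCommGroup E] [NormedSpace ℝ E]
  [NormedAddCommGroup F] [NormedSpace ℝ F] [NormedAddCommGroup G] [NormedSpace ℝ G]
  (ι : F →L[ℝ] E)

/-- `|ξ|₁ |η|₂ + |ξ|₂ |η|₁ + |y|₂ |ξ|₁ |η|₁`, with `|v|₁ = ‖ι v‖` and `|v|₂ = ‖v‖`. -/
def tameWeight (y ξ η : F) : ℝ :=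
  ‖ι ξ‖ * ‖η‖ + ‖ξ‖ * ‖ι η‖ + ‖y‖ * ‖ι ξ‖ * ‖ι η‖

lemma tameWeight_nonneg (y ξ η : F) : 0 ≤ tameWeight ι y ξ η := by
  unfold tameWeight; positivity

lemma norm_map_mul_norm_le_tameWeight (y ξ η : F) : ‖ι ξ‖ * ‖η‖ ≤ tameWeight ι y ξ η := by
  have : 0 ≤ ‖ξ‖ * ‖ι η‖ + ‖y‖ * ‖ι ξ‖ * ‖ι η‖ := by positivity
  unfold tameWeight; linarith

lemma norm_mul_norm_map_le_tameWeight (y ξ η : F) : ‖ξ‖ * ‖ι η‖ ≤ tameWeight ι y ξ η := by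
  have : 0 ≤ ‖ι ξ‖ * ‖η‖ + ‖y‖ * ‖ι ξ‖ * ‖ι η‖ := by positivity
  unfold tameWeight; linarith

variable {ι}

lemma add_mul_le_tameWeight (hι : ∀ x, ‖ι x‖ ≤ ‖x‖) {A B : ℝ} (hA : 0 ≤ A) (hB : 0 ≤ B)
    (y ξ η : F) :
    (A + B * ‖y‖) * (‖ι ξ‖ * ‖ι η‖) ≤ (A + B) * tameWeight ι y ξ η := by
  have h₁ : ‖ι ξ‖ * ‖ι η‖ ≤ tameWeight ι y ξ η :=
    (mul_le_mul_of_nonneg_left (hι η) (norm_nonneg _)).trans (norm_map_mul_norm_le_tameWeight ι y ξ η)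
  have h₂ : ‖y‖ * (‖ι ξ‖ * ‖ι η‖) ≤ tameWeight ι y ξ η := by
    have : 0 ≤ ‖ι ξ‖ * ‖η‖ + ‖ξ‖ * ‖ι η‖ := by positivity
    unfold tameWeight; linarith
  nlinarith [mul_le_mul_of_nonneg_left h₁ hA, mul_le_mul_of_nonneg_left h₂ hB]

lemma tameWeight_apply_le (hι : ∀ x, ‖ι x‖ ≤ ‖x‖) {y z : F} {L : F →L[ℝ] F} {C a b : ℝ}
    (hC : 0 ≤ C) (ha : 0 ≤ a) (hb : 0 ≤ b) (hιL : ∀ ζ, ‖ι (L ζ)‖ ≤ C * ‖ι ζ‖)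
    (hL : ∀ ζ, ‖L ζ‖ ≤ a * ‖ζ‖ + (a + b * ‖y‖) * ‖ι ζ‖) (hz : ‖z‖ ≤ a + b * ‖y‖) (ξ η : F) :
    tameWeight ι z (L ξ) (L η) ≤ C * (4 + C) * (a + b) * tameWeight ι y ξ η := by
  have hW := tameWeight_nonneg ι y ξ η
  calc tameWeight ι z (L ξ) (L η)
      ≤ C * ‖ι ξ‖ * (a * ‖η‖ + (a + b * ‖y‖) * ‖ι η‖)
        + (a * ‖ξ‖ + (a + b * ‖y‖) * ‖ι ξ‖) * (C * ‖ι η‖)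
        + (a + b * ‖y‖) * (C * ‖ι ξ‖) * (C * ‖ι η‖) := by
        unfold tameWeight
        gcongr
        exacts [hιL ξ, hL η, hL ξ, hιL η, hιL ξ, hιL η]
    _ = C * a * (‖ι ξ‖ * ‖η‖) + C * a * (‖ξ‖ * ‖ι η‖)
        + C * (2 + C) * ((a + b * ‖y‖) * (‖ι ξ‖ * ‖ι η‖)) := by ring
    _ ≤ C * a * tameWeight ι y ξ η + C * a * tameWeight ι y ξ η
        + C * (2 + C) * ((a + b) * tameWeight ι y ξ η) := by
        gcongr _ * ?_ + _ * ?_ + _ * ?_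
        exacts [norm_map_mul_norm_le_tameWeight ι y ξ η, norm_mul_norm_map_le_tameWeight ι y ξ η,
          add_mul_le_tameWeight hι ha hb y ξ η]
    _ ≤ C * (4 + C) * (a + b) * tameWeight ι y ξ η := by
        nlinarith [mul_nonneg (mul_nonneg hC hb) hW]

/-- The two terms of `d²(ψ₂ ∘ φ₂)_y` for `L = dφ₂_y`, `Q = d²φ₂_y`, `z = φ₂ y`, `L' = dψ₂_z`,
`Q' = d²ψ₂_z`. -/
lemma norm_second_order_comp_le (hι : ∀ x, ‖ι x‖ ≤ ‖x‖) {y z : F} {L : F →L[ℝ] F}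
    {Q : F →L[ℝ] F →L[ℝ] F} {L' : F →L[ℝ] G} {Q' : F →L[ℝ] F →L[ℝ] G}
    {κ κ' C₁ C₂ a b a' b' : ℝ} (hκ' : 0 ≤ κ') (hC₁ : 0 ≤ C₁) (hC₂ : 0 ≤ C₂) (ha : 0 ≤ a)
    (hb : 0 ≤ b) (ha' : 0 ≤ a') (hb' : 0 ≤ b')
    (hιL : ∀ ζ, ‖ι (L ζ)‖ ≤ C₁ * ‖ι ζ‖) (hL : ∀ ζ, ‖L ζ‖ ≤ a * ‖ζ‖ + (a + b * ‖y‖) * ‖ι ζ‖)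
    (hz : ‖z‖ ≤ a + b * ‖y‖) (hιQ : ∀ ξ η, ‖ι (Q ξ η)‖ ≤ C₂ * (‖ι ξ‖ * ‖ι η‖))
    (hQ : ∀ ξ η, ‖Q ξ η‖ ≤ κ * tameWeight ι y ξ η)
    (hL' : ∀ v, ‖L' v‖ ≤ a' * ‖v‖ + (a' + b' * ‖z‖) * ‖ι v‖)
    (hQ' : ∀ u v, ‖Q' u v‖ ≤ κ' * tameWeight ι z u v) (ξ η : F) :
    ‖Q' (L ξ) (L η) + L' (Q ξ η)‖ ≤
      (κ' * (C₁ * (4 + C₁) * (a + b)) + a' * κ + C₂ * (a' + b' * a + b' * b)) *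
        tameWeight ι y ξ η := by
  have h₁ : ‖Q' (L ξ) (L η)‖ ≤ κ' * (C₁ * (4 + C₁) * (a + b)) * tameWeight ι y ξ η := by
    rw [mul_assoc]
    exact (hQ' _ _).trans
      (mul_le_mul_of_nonneg_left (tameWeight_apply_le hι hC₁ ha hb hιL hL hz ξ η) hκ')
  have h₂ : ‖L' (Q ξ η)‖ ≤ (a' * κ + C₂ * (a' + b' * a + b' * b)) * tameWeight ι y ξ η :=
    calc ‖L' (Q ξ η)‖ ≤ a' * (κ * tameWeight ι y ξ η)
          + (a' + b' * (a + b * ‖y‖)) * (C₂ * (‖ι ξ‖ * ‖ι η‖)) := by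
          refine (hL' _).trans ?_
          gcongr _ * ?_ + (_ + _ * ?_) * ?_
          exacts [hQ ξ η, hιQ ξ η]
      _ = a' * κ * tameWeight ι y ξ η
          + C₂ * ((a' + b' * a + b' * b * ‖y‖) * (‖ι ξ‖ * ‖ι η‖)) := by ring
      _ ≤ a' * κ * tameWeight ι y ξ η
          + C₂ * ((a' + b' * a + b' * b) * tameWeight ι y ξ η) := by
          gcongr _ + _ * ?_
          exact add_mul_le_tameWeight hι (by positivity) (by positivity) y ξ η
      _ = (a' * κ + C₂ * (a' + b' * a + b' * b)) * tameWeight ι y ξ η := by ring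
  calc ‖Q' (L ξ) (L η) + L' (Q ξ η)‖ ≤ ‖Q' (L ξ) (L η)‖ + ‖L' (Q ξ η)‖ := norm_add_le _ _
    _ ≤ _ := by linarith

end Weight

section SecondDerivative

variable {E F G E' F' : Type*} [NormedAddCommGroup E] [NormedSpace ℝ E]
  [NormedAddCommGroup F] [NormedSpace ℝ F] [NormedAddCommGroup G] [NormedSpace ℝ G]
  [NormedAddCommGroup E'] [NormedSpace ℝ E'] [NormedAddCommGroup F'] [NormedSpace ℝ F']

lemma fderiv_fderiv_comp_apply {f : E → F} {g : F → G} {y : E} (hg : ContDiffAt ℝ 2 g (f y))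
    (hf : ContDiffAt ℝ 2 f y) (ξ η : E) :
    fderiv ℝ (fderiv ℝ (g ∘ f)) y ξ η =
      fderiv ℝ (fderiv ℝ g) (f y) (fderiv ℝ f y ξ) (fderiv ℝ f y η) +
        fderiv ℝ g (f y) (fderiv ℝ (fderiv ℝ f) y ξ η) := by
  have hchain : fderiv ℝ (g ∘ f) =ᶠ[𝓝 y] fun z => (fderiv ℝ g (f z)).comp (fderiv ℝ f z) := by
    filter_upwards [hf.eventually (by simp), hf.continuousAt.eventually (hg.eventually (by simp))]
      with z hfz hgz
    exact fderiv_comp z (hgz.differentiableAt two_ne_zero) (hfz.differentiableAt two_ne_zero)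
  have hdg : DifferentiableAt ℝ (fderiv ℝ g) (f y) :=
    (hg.fderiv_right le_rfl).differentiableAt one_ne_zero
  have hdf : DifferentiableAt ℝ (fderiv ℝ f) y :=
    (hf.fderiv_right le_rfl).differentiableAt one_ne_zero
  have hf₁ : DifferentiableAt ℝ f y := hf.differentiableAt two_ne_zero
  rw [hchain.fderiv_eq, fderiv_clm_comp (c := fun z => fderiv ℝ g (f z)) (hdg.comp y hf₁) hdf,
    fderiv_fun_comp y hdg hf₁]
  simp only [add_apply, ContinuousLinearMap.coe_comp, Function.comp_apply,
    ContinuousLinearMap.compL_apply, ContinuousLinearMap.flip_apply]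
  exact add_comm _ _

lemma comp_fderiv_eq_of_eventuallyEq {f : E → E'} {f' : E →L[ℝ] E'} {g : F → F'}
    {ι : F →L[ℝ] E} {j : F' →L[ℝ] E'} {y : F} (hf : HasFDerivAt f f' (ι y))
    (hg : DifferentiableAt ℝ g y) (h : j ∘ g =ᶠ[𝓝 y] f ∘ ι) :
    j.comp (fderiv ℝ g y) = f'.comp ι :=
  (j.hasFDerivAt.comp y hg.hasFDerivAt).unique ((hf.comp y ι.hasFDerivAt).congr_of_eventuallyEq h)

end SecondDerivative

section Growth

variable {E F G : Type*} [NormedAddCommGroup E] [NormedSpace ℝ E]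
  [NormedAddCommGroup F] [NormedSpace ℝ F] [NormedAddCommGroup G] [NormedSpace ℝ G]

lemma norm_add_smul_sub_le (w₀ w : F) {t : ℝ} (ht : t ∈ Icc (0 : ℝ) 1) :
    ‖w₀ + t • (w - w₀)‖ ≤ ‖w₀‖ + ‖w - w₀‖ := by
  refine (norm_add_le _ _).trans (add_le_add_right ?_ _)
  rw [norm_smul, Real.norm_of_nonneg ht.1]
  exact mul_le_of_le_one_left (norm_nonneg _) ht.2

lemma norm_sub_le_of_segment {g : F → G} {g' : F → F →L[ℝ] G} {w₀ w : F} {M : ℝ}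
    (hg : ∀ t ∈ Icc (0 : ℝ) 1, HasFDerivAt g (g' (w₀ + t • (w - w₀))) (w₀ + t • (w - w₀)))
    (hM : ∀ t ∈ Icc (0 : ℝ) 1, ‖g' (w₀ + t • (w - w₀)) (w - w₀)‖ ≤ M) :
    ‖g w - g w₀‖ ≤ M := by
  have hline (t : ℝ) : HasDerivAt (fun s : ℝ => w₀ + s • (w - w₀)) (w - w₀) t := by
    simpa using ((hasDerivAt_id t).smul_const (w - w₀)).const_add w₀
  simpa using norm_image_sub_le_of_norm_deriv_le_segment_01'
    (fun t ht => ((hg t ht).comp_hasDerivAt t (hline t)).hasDerivWithinAt)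
    (fun t ht => hM t (Ico_subset_Icc_self ht))

variable {ι : F →L[ℝ] E} {S : Set F} {R : ℝ}

lemma norm_fderiv_apply_sub_le (hSo : IsOpen S) (hS : Convex ℝ S)
    (hR : ∀ u ∈ S, ∀ v ∈ S, ‖ι (u - v)‖ ≤ R) {φ₂ : F → G} (hφ₂ : ContDiffOn ℝ 2 φ₂ S)
    {κ : ℝ} (hκ : 0 ≤ κ)
    (hest : ∀ y ∈ S, ∀ ξ η, ‖fderiv ℝ (fderiv ℝ φ₂) y ξ η‖ ≤ κ * tameWeight ι y ξ η)
    {w₀ w : F} (hw₀ : w₀ ∈ S) (hw : w ∈ S) (ζ : F) :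
    ‖fderiv ℝ φ₂ w ζ - fderiv ℝ φ₂ w₀ ζ‖ ≤
      κ * (R * ‖ζ‖ + (1 + R) * (‖w₀‖ + ‖w - w₀‖) * ‖ι ζ‖) := by
  refine norm_sub_le_of_segment (g := fun z => fderiv ℝ φ₂ z ζ)
    (g' := fun z => (ContinuousLinearMap.apply ℝ G ζ).comp (fderiv ℝ (fderiv ℝ φ₂) z))
    (fun t ht => ?_) (fun t ht => ?_)
  · have hz := (hφ₂.contDiffAt (hSo.mem_nhds (hS.add_smul_sub_mem hw₀ hw ht))).fderiv_right
      (m := 1) le_rfl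
    exact (ContinuousLinearMap.apply ℝ G ζ).hasFDerivAt.comp _
      (hz.differentiableAt one_ne_zero).hasFDerivAt
  · have hd : ‖ι (w - w₀)‖ ≤ R := hR w hw w₀ hw₀
    calc ‖fderiv ℝ (fderiv ℝ φ₂) (w₀ + t • (w - w₀)) (w - w₀) ζ‖
        ≤ κ * tameWeight ι (w₀ + t • (w - w₀)) (w - w₀) ζ :=
          hest _ (hS.add_smul_sub_mem hw₀ hw ht) _ _
      _ ≤ κ * (R * ‖ζ‖ + ‖w - w₀‖ * ‖ι ζ‖ + (‖w₀‖ + ‖w - w₀‖) * R * ‖ι ζ‖) := by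
          unfold tameWeight
          gcongr
          exact norm_add_smul_sub_le w₀ w ht
      _ ≤ κ * (R * ‖ζ‖ + (1 + R) * (‖w₀‖ + ‖w - w₀‖) * ‖ι ζ‖) := by
          gcongr κ * ?_
          nlinarith [mul_nonneg (norm_nonneg w₀) (norm_nonneg (ι ζ))]

lemma exists_norm_fderiv_apply_le (hSo : IsOpen S) (hS : Convex ℝ S)
    (hR : ∀ u ∈ S, ∀ v ∈ S, ‖ι (u - v)‖ ≤ R) {φ₂ : F → G} (hφ₂ : ContDiffOn ℝ 2 φ₂ S)
    {κ : ℝ} (hκ : 0 ≤ κ)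
    (hest : ∀ y ∈ S, ∀ ξ η, ‖fderiv ℝ (fderiv ℝ φ₂) y ξ η‖ ≤ κ * tameWeight ι y ξ η)
    {w₀ : F} (hw₀ : w₀ ∈ S) :
    ∃ A B : ℝ, 0 ≤ A ∧ 0 ≤ B ∧
      ∀ w ∈ S, ∀ ζ, ‖fderiv ℝ φ₂ w ζ‖ ≤ A * ‖ζ‖ + (A + B * ‖w‖) * ‖ι ζ‖ := by
  have hR₀ : 0 ≤ R := (norm_nonneg _).trans (hR w₀ hw₀ w₀ hw₀)
  refine ⟨‖fderiv ℝ φ₂ w₀‖ + κ * (R + 2 * (1 + R) * ‖w₀‖), κ * (1 + R), by positivity,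
    by positivity, fun w hw ζ => ?_⟩
  calc ‖fderiv ℝ φ₂ w ζ‖ ≤ ‖fderiv ℝ φ₂ w₀ ζ‖ + ‖fderiv ℝ φ₂ w ζ - fderiv ℝ φ₂ w₀ ζ‖ :=
        norm_le_insert' _ _
    _ ≤ ‖fderiv ℝ φ₂ w₀‖ * ‖ζ‖ + κ * (R * ‖ζ‖ + (1 + R) * (‖w₀‖ + (‖w₀‖ + ‖w‖)) * ‖ι ζ‖) := by
        gcongr
        · exact (fderiv ℝ φ₂ w₀).le_opNorm ζ
        · refine (norm_fderiv_apply_sub_le hSo hS hR hφ₂ hκ hest hw₀ hw ζ).trans ?_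
          gcongr
          exact (norm_sub_le _ _).trans_eq (add_comm _ _)
    _ = (‖fderiv ℝ φ₂ w₀‖ + κ * R) * ‖ζ‖
        + (κ * (2 * (1 + R) * ‖w₀‖) + κ * (1 + R) * ‖w‖) * ‖ι ζ‖ := by ring
    _ ≤ (‖fderiv ℝ φ₂ w₀‖ + κ * (R + 2 * (1 + R) * ‖w₀‖)) * ‖ζ‖
        + (‖fderiv ℝ φ₂ w₀‖ + κ * (R + 2 * (1 + R) * ‖w₀‖) + κ * (1 + R) * ‖w‖) * ‖ι ζ‖ := by
        gcongr ?_ * _ + (?_ + _) * _ <;>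
          nlinarith [mul_nonneg hκ hR₀, norm_nonneg (fderiv ℝ φ₂ w₀),
            mul_nonneg hκ (mul_nonneg (by positivity : (0 : ℝ) ≤ 2 * (1 + R)) (norm_nonneg w₀))]

lemma exists_norm_le_of_norm_fderiv_apply_le (hS : Convex ℝ S)
    (hR : ∀ u ∈ S, ∀ v ∈ S, ‖ι (u - v)‖ ≤ R) {φ₂ : F → G}
    (hφ₂ : ∀ w ∈ S, DifferentiableAt ℝ φ₂ w) {A B : ℝ} (hA : 0 ≤ A) (hB : 0 ≤ B)
    (hd : ∀ w ∈ S, ∀ ζ, ‖fderiv ℝ φ₂ w ζ‖ ≤ A * ‖ζ‖ + (A + B * ‖w‖) * ‖ι ζ‖)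
    {w₀ : F} (hw₀ : w₀ ∈ S) :
    ∃ A' B' : ℝ, 0 ≤ A' ∧ 0 ≤ B' ∧ ∀ w ∈ S, ‖φ₂ w‖ ≤ A' + B' * ‖w‖ := by
  have hR₀ : 0 ≤ R := (norm_nonneg _).trans (hR w₀ hw₀ w₀ hw₀)
  refine ⟨‖φ₂ w₀‖ + A * ‖w₀‖ + A * R + 2 * B * R * ‖w₀‖, A + B * R, by positivity,
    by positivity, fun w hw => ?_⟩
  have hinc : ‖φ₂ w - φ₂ w₀‖ ≤ A * ‖w - w₀‖ + (A + B * (‖w₀‖ + ‖w - w₀‖)) * R := by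
    refine norm_sub_le_of_segment (fun t ht => (hφ₂ _ (hS.add_smul_sub_mem hw₀ hw ht)).hasFDerivAt)
      (fun t ht => (hd _ (hS.add_smul_sub_mem hw₀ hw ht) _).trans ?_)
    gcongr
    exacts [norm_add_smul_sub_le w₀ w ht, hR w hw w₀ hw₀]
  calc ‖φ₂ w‖ ≤ ‖φ₂ w₀‖ + ‖φ₂ w - φ₂ w₀‖ := norm_le_insert' _ _
    _ ≤ ‖φ₂ w₀‖ + (A * (‖w₀‖ + ‖w‖) + (A + B * (‖w₀‖ + (‖w₀‖ + ‖w‖))) * R) := by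
        have hsub : ‖w - w₀‖ ≤ ‖w₀‖ + ‖w‖ := (norm_sub_le _ _).trans_eq (add_comm _ _)
        grw [hinc, hsub]
    _ = ‖φ₂ w₀‖ + A * ‖w₀‖ + A * R + 2 * B * R * ‖w₀‖ + (A + B * R) * ‖w‖ := by ring

lemma exists_tame_growth (hSo : IsOpen S) (hS : Convex ℝ S)
    (hR : ∀ u ∈ S, ∀ v ∈ S, ‖ι (u - v)‖ ≤ R) {φ₂ : F → G} (hφ₂ : ContDiffOn ℝ 2 φ₂ S)
    {κ : ℝ} (hκ : 0 ≤ κ)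
    (hest : ∀ y ∈ S, ∀ ξ η, ‖fderiv ℝ (fderiv ℝ φ₂) y ξ η‖ ≤ κ * tameWeight ι y ξ η) :
    ∃ a b : ℝ, 0 ≤ a ∧ 0 ≤ b ∧ ∀ w ∈ S,
      ‖φ₂ w‖ ≤ a + b * ‖w‖ ∧ ∀ ζ, ‖fderiv ℝ φ₂ w ζ‖ ≤ a * ‖ζ‖ + (a + b * ‖w‖) * ‖ι ζ‖ := by
  rcases S.eq_empty_or_nonempty with rfl | ⟨w₀, hw₀⟩
  · exact ⟨0, 0, le_rfl, le_rfl, fun w hw => hw.elim⟩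
  obtain ⟨A, B, hA, hB, hd⟩ := exists_norm_fderiv_apply_le hSo hS hR hφ₂ hκ hest hw₀
  obtain ⟨A', B', hA', hB', hv⟩ := exists_norm_le_of_norm_fderiv_apply_le hS hR
    (fun w hw => (hφ₂.contDiffAt (hSo.mem_nhds hw)).differentiableAt two_ne_zero) hA hB hd hw₀
  refine ⟨A + A', B + B', by positivity, by positivity, fun w hw => ⟨?_, fun ζ => ?_⟩⟩
  · calc ‖φ₂ w‖ ≤ A' + B' * ‖w‖ := hv w hw
      _ ≤ A + A' + (B + B') * ‖w‖ := by gcongr <;> linarith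
  · calc ‖fderiv ℝ φ₂ w ζ‖ ≤ A * ‖ζ‖ + (A + B * ‖w‖) * ‖ι ζ‖ := hd w hw ζ
      _ ≤ (A + A') * ‖ζ‖ + (A + A' + (B + B') * ‖w‖) * ‖ι ζ‖ := by gcongr <;> linarith

end Growth

lemma exists_open_of_eventually_comap {X Y : Type*} [TopologicalSpace X] {f : Y → X}
    {U : Set X} {x : X} {p : Y → Prop} (hU : IsOpen U) (hx : x ∈ U)
    (h : ∀ᶠ y in comap f (𝓝 x), p y) : ∃ W ⊆ U, IsOpen W ∧ x ∈ W ∧ ∀ y, f y ∈ W → p y := by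
  obtain ⟨t, ht, hts⟩ := mem_comap.1 h
  obtain ⟨W, hWt, hW, hxW⟩ := mem_nhds_iff.1 (inter_mem ht (hU.mem_nhds hx))
  exact ⟨W, fun u hu => (hWt hu).2, hW, hxW, fun y hy => hts (hWt hy).1⟩

lemma ContinuousAt.exists_eventually_norm_le {X E : Type*} [TopologicalSpace X]
    [SeminormedAddCommGroup E] {f : X → E} {x : X} (hf : ContinuousAt f x) :
    ∃ C, 0 ≤ C ∧ ∀ᶠ u in 𝓝 x, ‖f u‖ ≤ C :=
  ⟨‖f x‖ + 1, by positivity, (hf.norm.eventually_lt_const (lt_add_one _)).mono fun _ => le_of_lt⟩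

namespace IsTame

variable {H₁ H₂ : Type*}
  [NormedAddCommGroup H₁] [InnerProductSpace ℝ H₁] [CompleteSpace H₁]
  [NormedAddCommGroup H₂] [InnerProductSpace ℝ H₂] [CompleteSpace H₂]
  {ι : H₂ →L[ℝ] H₁} {U V : Set H₁} {φ ψ : H₁ → H₁} {φ₂ ψ₂ : H₂ → H₂} {x : H₁} {y : H₂}

lemma mapsTo_preimage (hφ : IsTame ι U φ φ₂) (hmaps : MapsTo φ U V) :
    MapsTo φ₂ (ι ⁻¹' U) (ι ⁻¹' V) :=
  fun y hy => show ι (φ₂ y) ∈ V from hφ.2.1 y hy ▸ hmaps hy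

lemma contDiffAt_restrict (hφ : IsTame ι U φ φ₂) (hU : IsOpen U) (hy : ι y ∈ U) :
    ContDiffAt ℝ 2 φ₂ y :=
  hφ.2.2.1.contDiffAt ((hU.preimage ι.continuous).mem_nhds hy)

lemma comp_fderiv (hφ : IsTame ι U φ φ₂) (hU : IsOpen U) (hy : ι y ∈ U) :
    ι.comp (fderiv ℝ φ₂ y) = (fderiv ℝ φ (ι y)).comp ι :=
  comp_fderiv_eq_of_eventuallyEq
    ((hφ.1.contDiffAt (hU.mem_nhds hy)).differentiableAt two_ne_zero).hasFDerivAt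
    ((hφ.contDiffAt_restrict hU hy).differentiableAt two_ne_zero)
    (by filter_upwards [(hU.preimage ι.continuous).mem_nhds hy] with z hz using (hφ.2.1 z hz).symm)

lemma map_fderiv_apply (hφ : IsTame ι U φ φ₂) (hU : IsOpen U) (hy : ι y ∈ U) (ξ : H₂) :
    ι (fderiv ℝ φ₂ y ξ) = fderiv ℝ φ (ι y) (ι ξ) :=
  congr($(hφ.comp_fderiv hU hy) ξ)

lemma map_fderiv_fderiv_apply (hφ : IsTame ι U φ φ₂) (hU : IsOpen U) (hy : ι y ∈ U)
    (ξ η : H₂) :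
    ι (fderiv ℝ (fderiv ℝ φ₂) y ξ η) = fderiv ℝ (fderiv ℝ φ) (ι y) (ι ξ) (ι η) := by
  set P := (ContinuousLinearMap.compL ℝ H₂ H₁ H₁).flip ι
  have hdφ : HasFDerivAt (P ∘ fderiv ℝ φ) (P.comp (fderiv ℝ (fderiv ℝ φ) (ι y))) (ι y) :=
    P.hasFDerivAt.comp _ (((hφ.1.contDiffAt (hU.mem_nhds hy)).fderiv_right (m := 1)
      le_rfl).differentiableAt one_ne_zero).hasFDerivAt
  have h := comp_fderiv_eq_of_eventuallyEq (j := ContinuousLinearMap.compL ℝ H₂ H₂ H₁ ι) hdφ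
    (((hφ.contDiffAt_restrict hU hy).fderiv_right (m := 1) le_rfl).differentiableAt one_ne_zero)
    (by
      filter_upwards [(hU.preimage ι.continuous).mem_nhds hy] with z hz
      exact hφ.comp_fderiv hU hz)
  simpa [P] using congr($h ξ η)

lemma exists_eventually_norm_fderiv_fderiv_le (hφ : IsTame ι U φ φ₂) (hx : x ∈ U) :
    ∃ κ > 0, ∀ᶠ y in comap ι (𝓝 x), ∀ ξ η,
      ‖fderiv ℝ (fderiv ℝ φ₂) y ξ η‖ ≤ κ * tameWeight ι y ξ η := by
  obtain ⟨W, -, hW, hxW, κ, hκ, hest⟩ := hφ.2.2.2 x hx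
  exact ⟨κ, hκ, mem_of_superset (preimage_mem_comap (hW.mem_nhds hxW)) hest⟩

lemma exists_eventually_tame_growth (hφ : IsTame ι U φ φ₂) (hx : x ∈ U) :
    ∃ a b : ℝ, 0 ≤ a ∧ 0 ≤ b ∧ ∀ᶠ y in comap ι (𝓝 x),
      ‖φ₂ y‖ ≤ a + b * ‖y‖ ∧ ∀ ζ, ‖fderiv ℝ φ₂ y ζ‖ ≤ a * ‖ζ‖ + (a + b * ‖y‖) * ‖ι ζ‖ := by
  obtain ⟨W, hWU, hW, hxW, κ, hκ, hest⟩ := hφ.2.2.2 x hx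
  obtain ⟨r, hr, hrW⟩ := Metric.isOpen_iff.1 hW x hxW
  have hR : ∀ u ∈ ι ⁻¹' ball x r, ∀ v ∈ ι ⁻¹' ball x r, ‖ι (u - v)‖ ≤ 2 * r := by
    intro u hu v hv
    rw [map_sub, ← dist_eq_norm]
    linarith [dist_triangle_right (ι u) (ι v) x, mem_ball.1 hu, mem_ball.1 hv]
  obtain ⟨a, b, ha, hb, hgrowth⟩ := exists_tame_growth (isOpen_ball.preimage ι.continuous)
    ((convex_ball x r).linear_preimage ι.toLinearMap) hR
    (hφ.2.2.1.mono fun _ hu => hWU (hrW hu)) hκ.le fun y hy => hest y (hrW hy)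
  exact ⟨a, b, ha, hb, mem_of_superset (preimage_mem_comap (ball_mem_nhds x hr)) hgrowth⟩

lemma exists_eventually_norm_map_fderiv_le (hφ : IsTame ι U φ φ₂) (hU : IsOpen U)
    (hx : x ∈ U) :
    ∃ C, 0 ≤ C ∧ ∀ᶠ y in comap ι (𝓝 x), ∀ ζ, ‖ι (fderiv ℝ φ₂ y ζ)‖ ≤ C * ‖ι ζ‖ := by
  obtain ⟨C, hC, hle⟩ := ((hφ.1.contDiffAt (hU.mem_nhds hx)).fderiv_right (m := 1)
    le_rfl).continuousAt.exists_eventually_norm_le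
  refine ⟨C, hC, ?_⟩
  filter_upwards [preimage_mem_comap (hU.mem_nhds hx), hle.comap ι] with y hy hCy ζ
  rw [hφ.map_fderiv_apply hU hy]
  exact ((fderiv ℝ φ (ι y)).le_opNorm _).trans (by gcongr)

lemma exists_eventually_norm_map_fderiv_fderiv_le (hφ : IsTame ι U φ φ₂) (hU : IsOpen U)
    (hx : x ∈ U) :
    ∃ C, 0 ≤ C ∧ ∀ᶠ y in comap ι (𝓝 x), ∀ ξ η,
      ‖ι (fderiv ℝ (fderiv ℝ φ₂) y ξ η)‖ ≤ C * (‖ι ξ‖ * ‖ι η‖) := by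
  obtain ⟨C, hC, hle⟩ := (((hφ.1.contDiffAt (hU.mem_nhds hx)).fderiv_right (m := 1)
    le_rfl).fderiv_right (m := 0) le_rfl).continuousAt.exists_eventually_norm_le
  refine ⟨C, hC, ?_⟩
  filter_upwards [preimage_mem_comap (hU.mem_nhds hx), hle.comap ι] with y hy hCy ξ η
  rw [hφ.map_fderiv_fderiv_apply hU hy, ← mul_assoc]
  exact ((fderiv ℝ (fderiv ℝ φ) (ι y)).le_opNorm₂ _ _).trans (by gcongr)

lemma tendsto_comap_nhds (hφ : IsTame ι U φ φ₂) (hU : IsOpen U) (hx : x ∈ U) :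
    Tendsto φ₂ (comap ι (𝓝 x)) (comap ι (𝓝 (φ x))) :=
  tendsto_comap_iff.2 <|
    ((hφ.1.continuousOn.continuousAt (hU.mem_nhds hx)).tendsto.comp tendsto_comap).congr'
      (mem_of_superset (preimage_mem_comap (hU.mem_nhds hx)) fun y hy => hφ.2.1 y hy)

lemma exists_eventually_comp_estimate (hι : ∀ x, ‖ι x‖ ≤ ‖x‖) (hφ : IsTame ι U φ φ₂)
    (hψ : IsTame ι V ψ ψ₂) (hU : IsOpen U) (hV : IsOpen V) (hmaps : MapsTo φ U V)
    (hx : x ∈ U) :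
    ∃ κ > 0, ∀ᶠ y in comap ι (𝓝 x), ∀ ξ η,
      ‖fderiv ℝ (fderiv ℝ (ψ₂ ∘ φ₂)) y ξ η‖ ≤ κ * tameWeight ι y ξ η := by
  obtain ⟨κ, hκ, hQ⟩ := hφ.exists_eventually_norm_fderiv_fderiv_le hx
  obtain ⟨a, b, ha, hb, hgrowth⟩ := hφ.exists_eventually_tame_growth hx
  obtain ⟨C₁, hC₁, hιL⟩ := hφ.exists_eventually_norm_map_fderiv_le hU hx
  obtain ⟨C₂, hC₂, hιQ⟩ := hφ.exists_eventually_norm_map_fderiv_fderiv_le hU hx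
  obtain ⟨κ', hκ', hQ'⟩ := hψ.exists_eventually_norm_fderiv_fderiv_le (hmaps hx)
  obtain ⟨a', b', ha', hb', hgrowth'⟩ := hψ.exists_eventually_tame_growth (hmaps hx)
  refine ⟨κ' * (C₁ * (4 + C₁) * (a + b)) + a' * κ + C₂ * (a' + b' * a + b' * b) + 1,
    by positivity, ?_⟩
  filter_upwards [preimage_mem_comap (hU.mem_nhds hx), hQ, hgrowth, hιL, hιQ,
    (hφ.tendsto_comap_nhds hU hx).eventually (hQ'.and hgrowth')]
    with y hy hQy hgy hιLy hιQy ⟨hQ'y, hg'y⟩ ξ η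
  rw [fderiv_fderiv_comp_apply (hψ.contDiffAt_restrict hV (hφ.mapsTo_preimage hmaps hy))
    (hφ.contDiffAt_restrict hU hy)]
  refine (norm_second_order_comp_le hι hκ'.le hC₁ hC₂ ha hb ha' hb' hιLy hgy.2 hgy.1 hιQy hQy
    hg'y.2 hQ'y ξ η).trans ?_
  nlinarith [tameWeight_nonneg ι y ξ η]

end IsTame

theorem tame_comp_general {H₁ H₂ : Type*}
    [NormedAddCommGroup H₁] [InnerProductSpace ℝ H₁] [CompleteSpace H₁]
    [NormedAddCommGroup H₂] [InnerProductSpace ℝ H₂] [CompleteSpace H₂]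
    (ι : H₂ →L[ℝ] H₁) (hι_norm : ∀ x : H₂, ‖ι x‖ ≤ ‖x‖)
    {U₁ V₁ : Set H₁} (hU₁ : IsOpen U₁) (hV₁ : IsOpen V₁)
    {φ ψ : H₁ → H₁} {φ₂ ψ₂ : H₂ → H₂}
    (hφ : IsTame ι U₁ φ φ₂) (hψ : IsTame ι V₁ ψ ψ₂)
    (hmaps : Set.MapsTo φ U₁ V₁) :
    IsTame ι U₁ (ψ ∘ φ) (ψ₂ ∘ φ₂) := by
  have hmaps₂ := hφ.mapsTo_preimage hmaps
  refine ⟨hψ.1.comp hφ.1 hmaps, fun y hy => ?_, hψ.2.2.1.comp hφ.2.2.1 hmaps₂, fun x hx => ?_⟩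
  · simp only [Function.comp_apply, hφ.2.1 y hy, hψ.2.1 _ (hmaps₂ hy)]
  · obtain ⟨κ, hκ, hest⟩ := hφ.exists_eventually_comp_estimate hι_norm hψ hU₁ hV₁ hmaps hx
    obtain ⟨W, hWU, hW, hxW, hWest⟩ := exists_open_of_eventually_comap hU₁ hx hest
    exact ⟨W, hWU, hW, hxW, κ, hκ, hWest⟩

/-- **Composition of tame maps is tame** (Theorem `thm:tame`).
If `φ : U₁ → V₁` and `ψ : V₁ → H₁` are `(H₁,H₂)`-tame, then so is
`ψ ∘ φ : U₁ → H₁`. -/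
theorem tame_comp {H₁ H₂ : Type*}
    [NormedAddCommGroup H₁] [InnerProductSpace ℝ H₁] [CompleteSpace H₁]
    [NormedAddCommGroup H₂] [InnerProductSpace ℝ H₂] [CompleteSpace H₂]
    (ι : H₂ →L[ℝ] H₁) (hι_inj : Function.Injective ι)
    (hι_dense : DenseRange ι) (hι_norm : ∀ x : H₂, ‖ι x‖ ≤ ‖x‖)
    {U₁ V₁ : Set H₁} (hU₁ : IsOpen U₁) (hV₁ : IsOpen V₁)
    {φ ψ : H₁ → H₁} {φ₂ ψ₂ : H₂ → H₂}
    (hφ : IsTame ι U₁ φ φ₂) (hψ : IsTame ι V₁ ψ ψ₂)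
    (hmaps : Set.MapsTo φ U₁ V₁) :
    IsTame ι U₁ (ψ ∘ φ) (ψ₂ ∘ φ₂) :=
  tame_comp_general ι hι_norm hU₁ hV₁ hφ hψ hmaps
end

section
/- Suppose φ : U₁ → H₁ is (H₁,H₂)-tame. Then for every x ∈ U₁ there exist an H₁-open neighborhood W′ ⊆ U₁ of x and a constant κ₁ > 0 such that for every y ∈ W′ ∩ H₂ and every η ∈ H₂ one has the estimate |d(φ|_{U₂})|_y η|₂ ≤ κ₁(|η|₂ + |y|₂|η|₁). -/
open Metric Set

/-!
Fix a base point `y₀ ∈ H₂` with `ι y₀` close to `x`, which exists by density, and work on a small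
`H₁`-ball `B` around `ι y₀` inside the tame neighbourhood. Its preimage in `H₂` is convex, so the
mean value inequality for `z ↦ dφ₂(z) η` along the segment from `y₀` to `y` bounds
`dφ₂(y) η - dφ₂(y₀) η` by the tame bound on `d²φ₂(z)(y - y₀, η)`. On the segment
`|y - y₀|₁` is at most the radius of `B` while `|z|₂` and `|y - y₀|₂` are at most `|y₀|₂ + |y|₂`;
the terms involving `y₀` and the radius are absorbed into the constant via `|η|₁ ≤ ‖ι‖ |η|₂`.
-/

section

variable {E F G : Type*} [NormedAddCommGroup E] [NormedSpace ℝ E]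
  [NormedAddCommGroup F] [NormedSpace ℝ F] [NormedAddCommGroup G] [NormedSpace ℝ G]

theorem norm_image_sub_le_of_norm_fderiv_apply_le_segment {f : E → G} {a b : E} {C : ℝ}
    (hf : ∀ z ∈ segment ℝ a b, DifferentiableAt ℝ f z)
    (bound : ∀ z ∈ segment ℝ a b, ‖fderiv ℝ f z (b - a)‖ ≤ C) :
    ‖f b - f a‖ ≤ C := by
  have hmem : ∀ t ∈ Icc (0 : ℝ) 1, AffineMap.lineMap a b t ∈ segment ℝ a b := fun t ht =>
    segment_eq_image_lineMap ℝ a b ▸ mem_image_of_mem _ ht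
  simpa only [Function.comp_apply, AffineMap.lineMap_apply_zero, AffineMap.lineMap_apply_one]
    using norm_image_sub_le_of_norm_deriv_le_segment_01' (f := f ∘ AffineMap.lineMap a b)
      (fun t ht => ((hf _ (hmem t ht)).hasFDerivAt.comp_hasDerivAt t
        AffineMap.hasDerivAt_lineMap).hasDerivWithinAt)
      (fun t ht => bound _ (hmem t (Ico_subset_Icc_self ht)))

theorem norm_fderiv_apply_sub_le_of_norm_fderiv_fderiv_le {f : E → G} {T : Set E}
    (hT : IsOpen T) (hTc : Convex ℝ T) (hf : ContDiffOn ℝ 2 f T) {a b : E} (ha : a ∈ T)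
    (hb : b ∈ T) (v : E) {C : ℝ}
    (bound : ∀ z ∈ segment ℝ a b, ‖fderiv ℝ (fderiv ℝ f) z (b - a) v‖ ≤ C) :
    ‖fderiv ℝ f b v - fderiv ℝ f a v‖ ≤ C := by
  have hf' : DifferentiableOn ℝ (fderiv ℝ f) T :=
    (hf.fderiv_of_isOpen hT (by norm_num)).differentiableOn one_ne_zero
  refine norm_image_sub_le_of_norm_fderiv_apply_le_segment (f := fun z => fderiv ℝ f z v)
    (fun z hz => ?_) (fun z hz => ?_)
  · exact (hf'.differentiableAt (hT.mem_nhds (hTc.segment_subset ha hb hz))).clm_apply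
      (differentiableAt_const v)
  · rw [fderiv_clm_apply (hf'.differentiableAt (hT.mem_nhds (hTc.segment_subset ha hb hz)))
      (differentiableAt_const v)]
    simpa using bound z hz

theorem norm_mem_segment_le {a b z : E} (hz : z ∈ segment ℝ a b) : ‖z‖ ≤ ‖a‖ + ‖b‖ := by
  simpa using (convex_closedBall (0 : E) (‖a‖ + ‖b‖)).segment_subset
    (by simp [norm_nonneg]) (by simp [norm_nonneg]) hz

theorem exists_norm_fderiv_apply_le_of_tame_on_ball (ι : E →L[ℝ] F) {φ : E → G} {y₀ : E}
    {r : ℝ} (hr : 0 < r) (hφ : ContDiffOn ℝ 2 φ (ι ⁻¹' ball (ι y₀) r)) {κ : ℝ} (hκ : 0 < κ)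
    (htame : ∀ z : E, ι z ∈ ball (ι y₀) r → ∀ ξ η : E,
      ‖fderiv ℝ (fderiv ℝ φ) z ξ η‖ ≤ κ * (‖ι ξ‖ * ‖η‖ + ‖ξ‖ * ‖ι η‖ + ‖z‖ * ‖ι ξ‖ * ‖ι η‖)) :
    ∃ κ₁ : ℝ, 0 < κ₁ ∧ ∀ y : E, ι y ∈ ball (ι y₀) r → ∀ η : E,
      ‖fderiv ℝ φ y η‖ ≤ κ₁ * (‖η‖ + ‖y‖ * ‖ι η‖) := by
  set B := ‖fderiv ℝ φ y₀‖
  refine ⟨B + κ * (1 + r) * (1 + ‖y₀‖ * ‖ι‖), by positivity, fun y hy η => ?_⟩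
  have hT : IsOpen (ι ⁻¹' ball (ι y₀) r) := isOpen_ball.preimage ι.continuous
  have hTc : Convex ℝ (ι ⁻¹' ball (ι y₀) r) := (convex_ball _ _).linear_preimage ι.toLinearMap
  have hy₀ : ι y₀ ∈ ball (ι y₀) r := mem_ball_self hr
  have hdist : ‖ι (y - y₀)‖ ≤ r := by
    rw [map_sub, ← dist_eq_norm]; exact (mem_ball.1 hy).le
  have hιη : ‖ι η‖ ≤ ‖ι‖ * ‖η‖ := ι.le_opNorm η
  have hdiff : ‖fderiv ℝ φ y η - fderiv ℝ φ y₀ η‖ ≤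
      κ * (r * ‖η‖ + (‖y₀‖ + ‖y‖) * ‖ι η‖ + (‖y₀‖ + ‖y‖) * r * ‖ι η‖) := by
    refine norm_fderiv_apply_sub_le_of_norm_fderiv_fderiv_le hT hTc hφ hy₀ hy η
      fun z hz => (htame z (hTc.segment_subset hy₀ hy hz) _ _).trans ?_
    have hz := norm_mem_segment_le hz
    have hyy₀ : ‖y - y₀‖ ≤ ‖y₀‖ + ‖y‖ := by linarith [norm_sub_le y y₀]
    gcongr
  calc ‖fderiv ℝ φ y η‖
      ≤ ‖fderiv ℝ φ y₀ η‖ + ‖fderiv ℝ φ y η - fderiv ℝ φ y₀ η‖ := norm_le_insert' _ _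
    _ ≤ B * ‖η‖ + κ * (r * ‖η‖ + (‖y₀‖ + ‖y‖) * ‖ι η‖ + (‖y₀‖ + ‖y‖) * r * ‖ι η‖) :=
        add_le_add ((fderiv ℝ φ y₀).le_opNorm η) hdiff
    _ ≤ _ := by
        have := mul_le_mul_of_nonneg_left hιη (by positivity : 0 ≤ κ * (1 + r) * ‖y₀‖)
        have : 0 ≤ κ * ‖η‖ := by positivity
        have : 0 ≤ (B + κ * (1 + r) * ‖y₀‖ * ‖ι‖) * (‖y‖ * ‖ι η‖) := by positivity
        linarith

end

theorem tame_first_derivative_estimate_general {H₁ H₂ : Type*}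
    [NormedAddCommGroup H₁] [InnerProductSpace ℝ H₁] [CompleteSpace H₁]
    [NormedAddCommGroup H₂] [InnerProductSpace ℝ H₂] [CompleteSpace H₂]
    (ι : H₂ →L[ℝ] H₁)
    (hι_dense : DenseRange ι)
    {U₁ : Set H₁}
    {φ : H₁ → H₁} {φ₂ : H₂ → H₂} (hφ : IsTame ι U₁ φ φ₂) :
    ∀ x ∈ U₁, ∃ W' : Set H₁, W' ⊆ U₁ ∧ IsOpen W' ∧ x ∈ W' ∧ ∃ κ₁ : ℝ, 0 < κ₁ ∧
      ∀ y : H₂, ι y ∈ W' → ∀ η : H₂,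
        ‖fderiv ℝ φ₂ y η‖ ≤ κ₁ * (‖η‖ + ‖y‖ * ‖ι η‖) := by
  intro x hx
  obtain ⟨-, -, hφ₂, htame⟩ := hφ
  obtain ⟨W, hWU, hW, hxW, κ, hκ, hbound⟩ := htame x hx
  obtain ⟨ε, hε, hballW⟩ := isOpen_iff.1 hW x hxW
  obtain ⟨y₀, hy₀⟩ := hι_dense.exists_dist_lt x (half_pos hε)
  have hball : ball (ι y₀) (ε / 2) ⊆ W :=
    (ball_subset_ball' (by rw [dist_comm]; linarith)).trans hballW
  refine ⟨ball (ι y₀) (ε / 2), hball.trans hWU, isOpen_ball, hy₀, ?_⟩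
  exact exists_norm_fderiv_apply_le_of_tame_on_ball ι (half_pos hε)
    (hφ₂.mono fun z hz => hWU (hball hz)) hκ fun z hz => hbound z (hball hz)

/-- **First–derivative tameness estimate** (Lemma `le:tame-1`). -/
theorem tame_first_derivative_estimate {H₁ H₂ : Type*}
    [NormedAddCommGroup H₁] [InnerProductSpace ℝ H₁] [CompleteSpace H₁]
    [NormedAddCommGroup H₂] [InnerProductSpace ℝ H₂] [CompleteSpace H₂]
    (ι : H₂ →L[ℝ] H₁) (hι_inj : Function.Injective ι)
    (hι_dense : DenseRange ι) (hι_norm : ∀ x : H₂, ‖ι x‖ ≤ ‖x‖)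
    {U₁ : Set H₁} (hU₁ : IsOpen U₁)
    {φ : H₁ → H₁} {φ₂ : H₂ → H₂} (hφ : IsTame ι U₁ φ φ₂) :
    ∀ x ∈ U₁, ∃ W' : Set H₁, W' ⊆ U₁ ∧ IsOpen W' ∧ x ∈ W' ∧ ∃ κ₁ : ℝ, 0 < κ₁ ∧
      ∀ y : H₂, ι y ∈ W' → ∀ η : H₂,
        ‖fderiv ℝ φ₂ y η‖ ≤ κ₁ * (‖η‖ + ‖y‖ * ‖ι η‖) :=
  tame_first_derivative_estimate_general ι hι_dense hφ
end

section
/- Suppose φ : U₁ → H₁ is (H₁,H₂)-tame. Then for every x ∈ U₁ there exist an H₁-open neighborhood W″ ⊆ U₁ of x and a constant κ₀ > 0 such that for every y ∈ W″ ∩ H₂ one has the estimate |φ(y)|₂ ≤ κ₀(1 + |y|₂). -/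
open Metric Set

/-! By density pick `y₀ ∈ H₂` with `ι y₀` in a ball `B ⊆ W` around `x` on which the tame bound
holds. For `ι y ∈ B` the segment `[y₀, y]` stays in the convex set `ι ⁻¹' B`, and `ξ = y - y₀`
has `|ξ|₁ ≤ diam B`, so the tame bound controls `d²φ₂(z)(ξ, ξ)` along the segment by a constant
times `|y₀|₂ + |y|₂`. Second-order Taylor expansion at `y₀` then bounds `|φ₂ y|₂` affinely
in `|y|₂`. -/

section

variable {E F G : Type*} [NormedAddCommGroup E] [NormedSpace ℝ E]
  [NormedAddCommGroup F] [NormedSpace ℝ F] [NormedAddCommGroup G] [NormedSpace ℝ G]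

theorem norm_sub_sub_fderiv_apply_le_of_segment {f : E → G} {a b : E} {M : ℝ}
    (hf : ∀ z ∈ segment ℝ a b, ContDiffAt ℝ 2 f z)
    (hM : ∀ z ∈ segment ℝ a b, ‖fderiv ℝ (fderiv ℝ f) z (b - a) (b - a)‖ ≤ M) :
    ‖f b - f a - fderiv ℝ f a (b - a)‖ ≤ M := by
  set c : ℝ → E := ⇑(AffineMap.lineMap (k := ℝ) a b)
  have hc : ∀ t ∈ Icc (0 : ℝ) 1, c t ∈ segment ℝ a b := fun t ht => by
    rw [segment_eq_image_lineMap]; exact mem_image_of_mem _ ht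
  have hc0 : c 0 = a := AffineMap.lineMap_apply_zero a b
  have hc1 : c 1 = b := AffineMap.lineMap_apply_one a b
  have hM₀ : 0 ≤ M := (norm_nonneg _).trans (hM a (left_mem_segment ℝ a b))
  have hDf : ∀ t ∈ Icc (0 : ℝ) 1, HasDerivAt (fun s => fderiv ℝ f (c s) (b - a))
      (fderiv ℝ (fderiv ℝ f) (c t) (b - a) (b - a)) t := fun t ht => by
    have hD := ((hf _ (hc t ht)).fderiv_right (m := 1) le_rfl).differentiableAt one_ne_zero
    simpa using (hD.hasFDerivAt.comp_hasDerivAt t AffineMap.hasDerivAt_lineMap).clm_apply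
      (hasDerivAt_const t (b - a))
  have hfirst : ∀ t ∈ Icc (0 : ℝ) 1,
      ‖fderiv ℝ f (c t) (b - a) - fderiv ℝ f a (b - a)‖ ≤ M := fun t ht => by
    have h := norm_image_sub_le_of_norm_deriv_le_segment' (fun s hs => (hDf s hs).hasDerivWithinAt)
      (fun s hs => hM _ (hc s (Ico_subset_Icc_self hs))) t ht
    rw [sub_zero, hc0] at h
    nlinarith [ht.2]
  have hg : ∀ t ∈ Icc (0 : ℝ) 1, HasDerivAt (fun s => f (c s) - s • fderiv ℝ f a (b - a))
      (fderiv ℝ f (c t) (b - a) - fderiv ℝ f a (b - a)) t := fun t ht => by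
    have hD := (hf _ (hc t ht)).differentiableAt two_ne_zero
    exact ((hD.hasFDerivAt.comp_hasDerivAt t AffineMap.hasDerivAt_lineMap).sub
      ((hasDerivAt_id t).smul_const (fderiv ℝ f a (b - a)))).congr_deriv (by rw [one_smul])
  have h := norm_image_sub_le_of_norm_deriv_le_segment_01'
    (fun t ht => (hg t ht).hasDerivWithinAt) (fun t ht => hfirst t (Ico_subset_Icc_self ht))
  rwa [hc0, hc1, one_smul, zero_smul, sub_zero, sub_right_comm] at h

theorem norm_le_of_tame_on_ball {ι : E →L[ℝ] F} {f : E → G} {x : F} {r κ : ℝ} (hκ : 0 ≤ κ)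
    (hf : ∀ y, ι y ∈ ball x r → ContDiffAt ℝ 2 f y)
    (hbound : ∀ y, ι y ∈ ball x r → ∀ ξ, ‖fderiv ℝ (fderiv ℝ f) y ξ ξ‖ ≤
      κ * (‖ι ξ‖ * ‖ξ‖ + ‖ξ‖ * ‖ι ξ‖ + ‖y‖ * ‖ι ξ‖ * ‖ι ξ‖))
    {a b : E} (ha : ι a ∈ ball x r) (hb : ι b ∈ ball x r) :
    ‖f b‖ ≤ ‖f a‖ + (‖fderiv ℝ f a‖ + 4 * κ * r * (1 + r)) * (‖a‖ + ‖b‖) := by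
  have hseg : ∀ z ∈ segment ℝ a b, ι z ∈ ball x r := fun z hz =>
    ((convex_ball x r).linear_preimage ι.toLinearMap).segment_subset ha hb hz
  have hz : ∀ z ∈ segment ℝ a b, ‖z‖ ≤ ‖a‖ + ‖b‖ := fun z hz => by
    have hsub := (convex_closedBall (0 : E) (‖a‖ + ‖b‖)).segment_subset
      (mem_closedBall_zero_iff.2 (le_add_of_nonneg_right (norm_nonneg b)))
      (mem_closedBall_zero_iff.2 (le_add_of_nonneg_left (norm_nonneg a)))
    exact mem_closedBall_zero_iff.1 (hsub hz)
  have hξ : ‖b - a‖ ≤ ‖a‖ + ‖b‖ := (norm_sub_le b a).trans_eq (add_comm _ _)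
  have hr : 0 ≤ r := dist_nonneg.trans (mem_ball.1 ha).le
  have hιξ : ‖ι (b - a)‖ ≤ 2 * r := by
    rw [map_sub, ← dist_eq_norm]
    linarith [dist_triangle_right (ι b) (ι a) x, mem_ball.1 ha, mem_ball.1 hb]
  have hM : ∀ z ∈ segment ℝ a b, ‖fderiv ℝ (fderiv ℝ f) z (b - a) (b - a)‖ ≤
      4 * κ * r * (1 + r) * (‖a‖ + ‖b‖) := fun z hzs => calc
    _ ≤ κ * (‖ι (b - a)‖ * ‖b - a‖ + ‖b - a‖ * ‖ι (b - a)‖ +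
          ‖z‖ * ‖ι (b - a)‖ * ‖ι (b - a)‖) := hbound z (hseg z hzs) (b - a)
    _ ≤ κ * (2 * r * (‖a‖ + ‖b‖) + (‖a‖ + ‖b‖) * (2 * r) +
          (‖a‖ + ‖b‖) * (2 * r) * (2 * r)) := by
          gcongr; exact hz z hzs
    _ = 4 * κ * r * (1 + r) * (‖a‖ + ‖b‖) := by ring
  have htaylor := norm_sub_sub_fderiv_apply_le_of_segment (fun z hz => hf z (hseg z hz)) hM
  calc ‖f b‖ = ‖f a + fderiv ℝ f a (b - a) + (f b - f a - fderiv ℝ f a (b - a))‖ := by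
        congr 1; abel
    _ ≤ ‖f a‖ + ‖fderiv ℝ f a (b - a)‖ + ‖f b - f a - fderiv ℝ f a (b - a)‖ := norm_add₃_le
    _ ≤ ‖f a‖ + ‖fderiv ℝ f a‖ * (‖a‖ + ‖b‖) + 4 * κ * r * (1 + r) * (‖a‖ + ‖b‖) := by
        gcongr
        exact (fderiv ℝ f a).le_opNorm_of_le hξ
    _ = _ := by ring

end

theorem tame_zeroth_order_estimate_general {H₁ H₂ : Type*}
    [NormedAddCommGroup H₁] [InnerProductSpace ℝ H₁] [CompleteSpace H₁]
    [NormedAddCommGroup H₂] [InnerProductSpace ℝ H₂] [CompleteSpace H₂]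
    (ι : H₂ →L[ℝ] H₁) (hι_dense : DenseRange ι)
    {U₁ : Set H₁} {φ : H₁ → H₁} {φ₂ : H₂ → H₂} (hφ : IsTame ι U₁ φ φ₂) :
    ∀ x ∈ U₁, ∃ W'' : Set H₁, W'' ⊆ U₁ ∧ IsOpen W'' ∧ x ∈ W'' ∧ ∃ κ₀ : ℝ, 0 < κ₀ ∧
      ∀ y : H₂, ι y ∈ W'' → ‖φ₂ y‖ ≤ κ₀ * (1 + ‖y‖) := by
  intro x hx
  obtain ⟨-, -, hφ₂, htame⟩ := hφ
  obtain ⟨W, hWU, hWopen, hxW, κ, hκ, hbound⟩ := htame x hx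
  obtain ⟨r, hr, hball⟩ := isOpen_iff.1 hWopen x hxW
  obtain ⟨y₀, hy₀⟩ : ∃ y₀, ι y₀ ∈ ball x r :=
    hι_dense.exists_mem_open isOpen_ball ⟨x, mem_ball_self hr⟩
  have hsmooth : ∀ y, ι y ∈ ball x r → ContDiffAt ℝ 2 φ₂ y := fun y hy =>
    (hφ₂.mono (preimage_mono (hball.trans hWU))).contDiffAt
      ((isOpen_ball.preimage ι.continuous).mem_nhds hy)
  set K := ‖fderiv ℝ φ₂ y₀‖ + 4 * κ * r * (1 + r)
  have hK : 0 ≤ K := by positivity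
  refine ⟨ball x r, hball.trans hWU, isOpen_ball, mem_ball_self hr,
    ‖φ₂ y₀‖ + K * (1 + ‖y₀‖) + 1, by positivity, fun y hy => ?_⟩
  have h := norm_le_of_tame_on_ball hκ.le hsmooth (fun z hz ξ => hbound z (hball hz) ξ ξ) hy₀ hy
  nlinarith [norm_nonneg (φ₂ y₀), norm_nonneg y, norm_nonneg y₀, mul_nonneg hK (norm_nonneg y₀)]

/-- **Zeroth–order tameness estimate** (Lemma `le:tame-0`). -/
theorem tame_zeroth_order_estimate {H₁ H₂ : Type*}
    [NormedAddCommGroup H₁] [InnerProductSpace ℝ H₁] [CompleteSpace H₁]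
    [NormedAddCommGroup H₂] [InnerProductSpace ℝ H₂] [CompleteSpace H₂]
    (ι : H₂ →L[ℝ] H₁) (hι_inj : Function.Injective ι)
    (hι_dense : DenseRange ι) (hι_norm : ∀ x : H₂, ‖ι x‖ ≤ ‖x‖)
    {U₁ : Set H₁} (hU₁ : IsOpen U₁)
    {φ : H₁ → H₁} {φ₂ : H₂ → H₂} (hφ : IsTame ι U₁ φ φ₂) :
    ∀ x ∈ U₁, ∃ W'' : Set H₁, W'' ⊆ U₁ ∧ IsOpen W'' ∧ x ∈ W'' ∧ ∃ κ₀ : ℝ, 0 < κ₀ ∧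
      ∀ y : H₂, ι y ∈ W'' → ‖φ₂ y‖ ≤ κ₀ * (1 + ‖y‖) :=
  tame_zeroth_order_estimate_general ι hι_dense hφ
end

section
/- Suppose φ : U₁ → H₁ is (H₁,H₂)-tame. Then for every x ∈ U₁ there exist an H₁-open neighborhood W ⊆ U₁ of x and a constant κ > 0 such that for all y₀, y₁ ∈ W ∩ H₂ and all η ∈ H₂ one has |(d(φ|_{U₂})|_{y₁} − d(φ|_{U₂})|_{y₀})η|₂ ≤ κ(|y₁ − y₀|₁|η|₂ + |y₁ − y₀|₂|η|₁) + (κ/2)(|y₁|₂ + |y₀|₂)|y₁ − y₀|₁|η|₁. -/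
open Metric Set

/-!
Shrink the neighbourhood `W` given by tameness to a ball, so that its trace on `H₂` is convex.
For `y₀, y₁` in it, apply the mean value inequality to `t ↦ dφ₂(y₀ + t(y₁ - y₀)) η` on `[0, 1]`:
its derivative is `d²φ₂(y)(y₁ - y₀, η)` at a point `y` of the segment, which the tame bound
controls, and `‖y‖ ≤ ‖y₀‖ + ‖y₁‖` there.
-/

section MeanValue

variable {E F : Type*} [NormedAddCommGroup E] [NormedSpace ℝ E]
  [NormedAddCommGroup F] [NormedSpace ℝ F]

theorem norm_fderiv_apply_sub_le_of_norm_fderiv_fderiv_le_s4 {f : E → F} {y₀ y₁ : E}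
    (hf : ∀ y ∈ segment ℝ y₀ y₁, DifferentiableAt ℝ (fderiv ℝ f) y) (η : E) {C : ℝ}
    (hC : ∀ y ∈ segment ℝ y₀ y₁, ‖fderiv ℝ (fderiv ℝ f) y (y₁ - y₀) η‖ ≤ C) :
    ‖fderiv ℝ f y₁ η - fderiv ℝ f y₀ η‖ ≤ C := by
  set γ : ℝ → E := ⇑(AffineMap.lineMap (k := ℝ) y₀ y₁)
  have hγ_mem : ∀ t ∈ Icc (0 : ℝ) 1, γ t ∈ segment ℝ y₀ y₁ := fun t ht => by
    rw [segment_eq_image_lineMap]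
    exact mem_image_of_mem _ ht
  have hderiv : ∀ t ∈ Icc (0 : ℝ) 1, HasDerivWithinAt (fun t => fderiv ℝ f (γ t) η)
      (fderiv ℝ (fderiv ℝ f) (γ t) (y₁ - y₀) η) (Icc 0 1) t := fun t ht =>
    (((hf _ (hγ_mem t ht)).hasFDerivAt.comp_hasDerivAt t
      AffineMap.hasDerivAt_lineMap).clm_apply (hasDerivAt_const t η)).hasDerivWithinAt.congr_deriv
      (by simp)
  simpa [γ] using norm_image_sub_le_of_norm_deriv_le_segment_01' hderiv
    fun t ht => hC _ (hγ_mem t (Ico_subset_Icc_self ht))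

end MeanValue

theorem norm_le_add_of_mem_segment {E : Type*} [SeminormedAddCommGroup E] [NormedSpace ℝ E]
    {y₀ y₁ y : E} (hy : y ∈ segment ℝ y₀ y₁) : ‖y‖ ≤ ‖y₀‖ + ‖y₁‖ :=
  ((convexOn_norm convex_univ).le_on_segment (mem_univ _) (mem_univ _) hy).trans
    (max_le_add_of_nonneg (norm_nonneg _) (norm_nonneg _))

theorem tame_difference_estimate_general {H₁ H₂ : Type*}
    [NormedAddCommGroup H₁] [InnerProductSpace ℝ H₁] [CompleteSpace H₁]
    [NormedAddCommGroup H₂] [InnerProductSpace ℝ H₂] [CompleteSpace H₂]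
    (ι : H₂ →L[ℝ] H₁)
    {U₁ : Set H₁} (hU₁ : IsOpen U₁)
    {φ : H₁ → H₁} {φ₂ : H₂ → H₂} (hφ : IsTame ι U₁ φ φ₂) :
    ∀ x ∈ U₁, ∃ W : Set H₁, W ⊆ U₁ ∧ IsOpen W ∧ x ∈ W ∧ ∃ κ : ℝ, 0 < κ ∧
      ∀ y₀ y₁ : H₂, ι y₀ ∈ W → ι y₁ ∈ W → ∀ η : H₂,
        ‖fderiv ℝ φ₂ y₁ η - fderiv ℝ φ₂ y₀ η‖ ≤
          κ * (‖ι y₁ - ι y₀‖ * ‖η‖ + ‖y₁ - y₀‖ * ‖ι η‖)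
            + (κ / 2) * (‖y₁‖ + ‖y₀‖) * ‖ι y₁ - ι y₀‖ * ‖ι η‖ := by
  intro x hx
  obtain ⟨-, -, hφ₂, htame⟩ := hφ
  obtain ⟨W, hWU, hW, hxW, κ, hκ, hbound⟩ := htame x hx
  obtain ⟨r, hr, hball⟩ := Metric.isOpen_iff.1 hW x hxW
  refine ⟨ball x r, hball.trans hWU, isOpen_ball, mem_ball_self hr, 2 * κ, by positivity, ?_⟩
  intro y₀ y₁ hy₀ hy₁ η
  have hseg : segment ℝ y₀ y₁ ⊆ ι ⁻¹' ball x r :=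
    ((convex_ball x r).linear_preimage ι.toLinearMap).segment_subset hy₀ hy₁
  have hV : IsOpen (ι ⁻¹' U₁) := hU₁.preimage ι.continuous
  have hdiff : ∀ y ∈ segment ℝ y₀ y₁, DifferentiableAt ℝ (fderiv ℝ φ₂) y := fun y hy =>
    ((hφ₂.fderiv_of_isOpen hV (m := 1) (by norm_num)).differentiableOn one_ne_zero).differentiableAt
      (hV.mem_nhds (hWU (hball (hseg hy))))
  refine norm_fderiv_apply_sub_le_of_norm_fderiv_fderiv_le_s4 hdiff η fun y hy => ?_
  have hy_norm : ‖y‖ ≤ ‖y₀‖ + ‖y₁‖ := norm_le_add_of_mem_segment hy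
  calc _ ≤ κ * (‖ι y₁ - ι y₀‖ * ‖η‖ + ‖y₁ - y₀‖ * ‖ι η‖ + ‖y‖ * ‖ι y₁ - ι y₀‖ * ‖ι η‖) := by
        simpa only [map_sub] using hbound y (hball (hseg hy)) (y₁ - y₀) η
    _ ≤ _ := by
        have hlin : 0 ≤ ‖ι y₁ - ι y₀‖ * ‖η‖ + ‖y₁ - y₀‖ * ‖ι η‖ := by positivity
        have hquad : ‖y‖ * (‖ι y₁ - ι y₀‖ * ‖ι η‖) ≤ (‖y₀‖ + ‖y₁‖) * (‖ι y₁ - ι y₀‖ * ‖ι η‖) := by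
          gcongr
        nlinarith [mul_le_mul_of_nonneg_left hquad hκ.le, mul_nonneg hκ.le hlin]

/-- **Differences estimate** (Lemma `le:tame-3`). -/
theorem tame_difference_estimate {H₁ H₂ : Type*}
    [NormedAddCommGroup H₁] [InnerProductSpace ℝ H₁] [CompleteSpace H₁]
    [NormedAddCommGroup H₂] [InnerProductSpace ℝ H₂] [CompleteSpace H₂]
    (ι : H₂ →L[ℝ] H₁) (hι_inj : Function.Injective ι)
    (hι_dense : DenseRange ι) (hι_norm : ∀ x : H₂, ‖ι x‖ ≤ ‖x‖)
    {U₁ : Set H₁} (hU₁ : IsOpen U₁)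
    {φ : H₁ → H₁} {φ₂ : H₂ → H₂} (hφ : IsTame ι U₁ φ φ₂) :
    ∀ x ∈ U₁, ∃ W : Set H₁, W ⊆ U₁ ∧ IsOpen W ∧ x ∈ W ∧ ∃ κ : ℝ, 0 < κ ∧
      ∀ y₀ y₁ : H₂, ι y₀ ∈ W → ι y₁ ∈ W → ∀ η : H₂,
        ‖fderiv ℝ φ₂ y₁ η - fderiv ℝ φ₂ y₀ η‖ ≤
          κ * (‖ι y₁ - ι y₀‖ * ‖η‖ + ‖y₁ - y₀‖ * ‖ι η‖)
            + (κ / 2) * (‖y₁‖ + ‖y₀‖) * ‖ι y₁ - ι y₀‖ * ‖ι η‖ :=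
  tame_difference_estimate_general ι hU₁ hφ
end

section
/- Suppose φ : U₁ → H₁ is (H₁,H₂)-tame, 0 ∈ U₁, and φ(0) = 0. Then there exist an H₁-open neighborhood W₀ ⊆ U₁ of 0 and a constant κ > 0 such that |φ(y)|₂ ≤ κ|y|₂ for every y ∈ W₀ ∩ H₂. -/
open Metric Set

/- The tame estimate at `0` controls the second derivative of `φ₂` along the ray through `y`
by `3κ‖y‖₂` as soon as `‖y‖₁ ≤ 1`. A second-order Taylor bound along the segment `[0, y]`,
together with `φ₂ 0 = 0` (injectivity of `ι`), then gives
`‖φ₂ y‖₂ ≤ ‖Dφ₂(0)‖ ‖y‖₂ + 3κ‖y‖₂`. -/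

theorem norm_sub_sub_fderiv_apply_le_of_segment_s6 {E F : Type*}
    [NormedAddCommGroup E] [NormedSpace ℝ E] [NormedAddCommGroup F] [NormedSpace ℝ F]
    {f : E → F} {s : Set E} (hs : IsOpen s) (hf : ContDiffOn ℝ 2 f s) {x y : E}
    (hseg : ∀ t ∈ Icc (0 : ℝ) 1, x + t • y ∈ s) {M : ℝ}
    (hM : ∀ t ∈ Icc (0 : ℝ) 1, ‖fderiv ℝ (fderiv ℝ f) (x + t • y) y y‖ ≤ M) :
    ‖f (x + y) - f x - fderiv ℝ f x y‖ ≤ M := by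
  have hline (t : ℝ) : HasDerivAt (fun τ : ℝ => x + τ • y) y t := by
    simpa using ((hasDerivAt_id t).smul_const y).const_add x
  have hnhds {t : ℝ} (ht : t ∈ Icc (0 : ℝ) 1) : s ∈ nhds (x + t • y) := hs.mem_nhds (hseg t ht)
  have hdf : DifferentiableOn ℝ f s := hf.differentiableOn (by norm_num)
  have hdDf : DifferentiableOn ℝ (fderiv ℝ f) s :=
    (hf.fderiv_of_isOpen hs (by norm_num)).differentiableOn one_ne_zero
  have hf' : ∀ t ∈ Icc (0 : ℝ) 1,
      HasDerivAt (fun τ : ℝ => f (x + τ • y)) (fderiv ℝ f (x + t • y) y) t := fun t ht =>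
    ((hdf _ (hseg t ht)).differentiableAt (hnhds ht)).hasFDerivAt.comp_hasDerivAt t (hline t)
  have hf'' : ∀ t ∈ Icc (0 : ℝ) 1, HasDerivAt (fun τ : ℝ => fderiv ℝ f (x + τ • y) y)
      (fderiv ℝ (fderiv ℝ f) (x + t • y) y y) t := fun t ht => by
    have hDf : HasDerivAt (fun τ : ℝ => fderiv ℝ f (x + τ • y))
        (fderiv ℝ (fderiv ℝ f) (x + t • y) y) t :=
      ((hdDf _ (hseg t ht)).differentiableAt (hnhds ht)).hasFDerivAt.comp_hasDerivAt t (hline t)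
    simpa using hDf.clm_apply (hasDerivAt_const t y)
  have hM0 : 0 ≤ M := (norm_nonneg _).trans (hM 0 (left_mem_Icc.2 zero_le_one))
  have hgrowth : ∀ t ∈ Icc (0 : ℝ) 1,
      ‖fderiv ℝ f (x + t • y) y - fderiv ℝ f x y‖ ≤ M := fun t ht => by
    have := norm_image_sub_le_of_norm_deriv_le_segment' (fun τ hτ => (hf'' τ hτ).hasDerivWithinAt)
      (fun τ hτ => hM τ (Ico_subset_Icc_self hτ)) t ht
    simp only [zero_smul, add_zero, sub_zero] at this
    exact this.trans (mul_le_of_le_one_right hM0 ht.2)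
  have := norm_image_sub_le_of_norm_deriv_le_segment_01'
    (f := fun τ : ℝ => f (x + τ • y) - τ • fderiv ℝ f x y)
    (fun t ht => ((hf' t ht).sub ((hasDerivAt_id t).smul_const _)).hasDerivWithinAt)
    (fun t ht => by simpa using hgrowth t (Ico_subset_Icc_self ht))
  simpa [sub_right_comm] using this

theorem norm_le_of_norm_fderiv_fderiv_smul_le {E F : Type*}
    [NormedAddCommGroup E] [NormedSpace ℝ E] [NormedAddCommGroup F] [NormedSpace ℝ F]
    {f : E → F} {s : Set E} (hs : IsOpen s) (hf : ContDiffOn ℝ 2 f s) (hf0 : f 0 = 0) {y : E}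
    (hseg : ∀ t ∈ Icc (0 : ℝ) 1, t • y ∈ s) {C : ℝ}
    (hC : ∀ t ∈ Icc (0 : ℝ) 1, ‖fderiv ℝ (fderiv ℝ f) (t • y) y y‖ ≤ C * ‖y‖) :
    ‖f y‖ ≤ (‖fderiv ℝ f 0‖ + C) * ‖y‖ := by
  have htaylor := norm_sub_sub_fderiv_apply_le_of_segment_s6 hs hf (x := 0)
    (by simpa only [zero_add] using hseg) (by simpa only [zero_add] using hC)
  rw [zero_add, hf0, sub_zero] at htaylor
  calc ‖f y‖ ≤ ‖f y - fderiv ℝ f 0 y‖ + ‖fderiv ℝ f 0 y‖ := norm_le_norm_sub_add _ _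
    _ ≤ C * ‖y‖ + ‖fderiv ℝ f 0‖ * ‖y‖ := add_le_add htaylor ((fderiv ℝ f 0).le_opNorm y)
    _ = (‖fderiv ℝ f 0‖ + C) * ‖y‖ := by ring

theorem tame_linear_estimate_at_zero_general {H₁ H₂ : Type*}
    [NormedAddCommGroup H₁] [InnerProductSpace ℝ H₁] [CompleteSpace H₁]
    [NormedAddCommGroup H₂] [InnerProductSpace ℝ H₂] [CompleteSpace H₂]
    (ι : H₂ →L[ℝ] H₁) (hι_inj : Function.Injective ι)
    {U₁ : Set H₁}
    {φ : H₁ → H₁} {φ₂ : H₂ → H₂} (hφ : IsTame ι U₁ φ φ₂)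
    (h0 : (0 : H₁) ∈ U₁) (hφ0 : φ 0 = 0) :
    ∃ W₀ : Set H₁, W₀ ⊆ U₁ ∧ IsOpen W₀ ∧ (0 : H₁) ∈ W₀ ∧ ∃ κ : ℝ, 0 < κ ∧
      ∀ y : H₂, ι y ∈ W₀ → ‖φ₂ y‖ ≤ κ * ‖y‖ := by
  obtain ⟨-, hcomm, hφ₂, htame⟩ := hφ
  obtain ⟨W, hWU, hWopen, hW0, κ, hκ, hbound⟩ := htame 0 h0
  obtain ⟨r, hr, hrW⟩ := Metric.isOpen_iff.1 hWopen 0 hW0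
  have hBW : ball (0 : H₁) (min r 1) ⊆ W := (ball_subset_ball (min_le_left _ _)).trans hrW
  have h0B : (0 : H₁) ∈ ball 0 (min r 1) := mem_ball_self (lt_min hr one_pos)
  have hφ₂0 : φ₂ 0 = 0 := hι_inj (by rw [map_zero, ← hcomm 0 (by simpa using h0), map_zero, hφ0])
  refine ⟨_, hBW.trans hWU, isOpen_ball, h0B, ‖fderiv ℝ φ₂ 0‖ + 3 * κ, by positivity,
    fun y hy => ?_⟩
  have hseg : ∀ t ∈ Icc (0 : ℝ) 1, ι (t • y) ∈ ball 0 (min r 1) := fun t ht => by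
    rw [map_smul]
    exact (convex_ball (0 : H₁) _).smul_mem_of_zero_mem h0B hy ht
  have hιy : ‖ι y‖ ≤ 1 := (mem_ball_zero_iff.1 hy).le.trans (min_le_right _ _)
  refine norm_le_of_norm_fderiv_fderiv_smul_le (isOpen_ball.preimage ι.continuous)
    (hφ₂.mono fun z hz => hWU (hBW hz)) hφ₂0 hseg fun t ht => ?_
  have hty : ‖t • y‖ ≤ ‖y‖ := by
    rw [norm_smul, Real.norm_of_nonneg ht.1]
    exact mul_le_of_le_one_left (norm_nonneg _) ht.2
  calc _ ≤ κ * (‖ι y‖ * ‖y‖ + ‖y‖ * ‖ι y‖ + ‖t • y‖ * ‖ι y‖ * ‖ι y‖) :=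
        hbound _ (hBW (hseg t ht)) y y
    _ ≤ κ * (1 * ‖y‖ + ‖y‖ * 1 + ‖y‖ * 1 * 1) := by gcongr
    _ = 3 * κ * ‖y‖ := by ring

/-- If `φ` is tame, `0 ∈ U₁` and `φ 0 = 0`, then near `0` the restriction of
`φ` satisfies the linear estimate `|φ(y)|₂ ≤ κ |y|₂` (estimate `eq:phi(y)`). -/
theorem tame_linear_estimate_at_zero {H₁ H₂ : Type*}
    [NormedAddCommGroup H₁] [InnerProductSpace ℝ H₁] [CompleteSpace H₁]
    [NormedAddCommGroup H₂] [InnerProductSpace ℝ H₂] [CompleteSpace H₂]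
    (ι : H₂ →L[ℝ] H₁) (hι_inj : Function.Injective ι)
    (hι_dense : DenseRange ι) (hι_norm : ∀ x : H₂, ‖ι x‖ ≤ ‖x‖)
    {U₁ : Set H₁} (hU₁ : IsOpen U₁)
    {φ : H₁ → H₁} {φ₂ : H₂ → H₂} (hφ : IsTame ι U₁ φ φ₂)
    (h0 : (0 : H₁) ∈ U₁) (hφ0 : φ 0 = 0) :
    ∃ W₀ : Set H₁, W₀ ⊆ U₁ ∧ IsOpen W₀ ∧ (0 : H₁) ∈ W₀ ∧ ∃ κ : ℝ, 0 < κ ∧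
      ∀ y : H₂, ι y ∈ W₀ → ‖φ₂ y‖ ≤ κ * ‖y‖ :=
  tame_linear_estimate_at_zero_general ι hι_inj hφ h0 hφ0
end
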